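/- Let T be a hypercyclic continuous linear operator on X whose set of uniformly recurrent points is dense in X. Then T is U-frequently hypercyclic if and only if there exist a vector x ∈ X with dense T-orbit and a real number ε > 0 such that the set {n ∈ ℕ : ‖Tⁿx‖ < ε} has positive upper density (the latter condition expresses that the parameter c(T) is positive). -/
import Mathlib

open Filter Set

/-- The upper density of a set `A ⊆ ℕ`: `limsup_N #{n ∈ A : n ≤ N} / (N + 1)`. -/
noncomputable def upperDensity (A : Set ℕ) : ℝ :=
  Filter.limsup (fun N : ℕ => ((A ∩ Set.Iic N).ncard : ℝ) / ((N : ℝ) + 1)) Filter.atTop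

/-- `x` is uniformly recurrent for `T`: for every neighborhood `O` of `x`, the set of
return times `{n : Tⁿx ∈ O}` is syndetic. -/
def UniformlyRecurrent {𝕜 : Type*} [RCLike 𝕜] {X : Type*} [NormedAddCommGroup X]
    [NormedSpace 𝕜 X] (T : X →L[𝕜] X) (x : X) : Prop :=
  ∀ O ∈ nhds x, ∃ N : ℕ, ∀ a : ℕ, ∃ n : ℕ, a ≤ n ∧ n < a + N ∧ (T ^ n) x ∈ O

private lemma ud_ncard_inter_Iic_eq (A : Set ℕ) (N : ℕ) [DecidablePred (· ∈ A)] :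
    (A ∩ Set.Iic N).ncard = ((Finset.range (N + 1)).filter (fun n => n ∈ A)).card := by
  rw [← Set.ncard_coe_finset]
  congr 1
  ext n
  simp [Nat.lt_succ_iff, and_comm]

private lemma ud_ncard_le (A : Set ℕ) (N : ℕ) : (A ∩ Set.Iic N).ncard ≤ N + 1 := by
  classical
  rw [ud_ncard_inter_Iic_eq]
  calc ((Finset.range (N + 1)).filter (fun n => n ∈ A)).card
      ≤ (Finset.range (N + 1)).card := Finset.card_filter_le _ _
    _ = N + 1 := Finset.card_range _

private lemma ud_inter_finite (A : Set ℕ) (N : ℕ) : (A ∩ Set.Iic N).Finite :=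
  (Set.finite_Iic N).inter_of_right A

private lemma ud_bounded (A : Set ℕ) :
    Filter.IsBoundedUnder (· ≤ ·) Filter.atTop
      (fun N : ℕ => ((A ∩ Set.Iic N).ncard : ℝ) / ((N : ℝ) + 1)) := by
  apply Filter.isBoundedUnder_of
  refine ⟨1, fun N => ?_⟩
  rw [div_le_one (by positivity)]
  have := ud_ncard_le A N
  exact_mod_cast this

/-- If, beyond every `M`, there is a scale `N` at which the counting function is at least
`δ(N+1)`, then the upper density is at least `δ`. -/
private lemma ud_ge_of_frequently (A : Set ℕ) (δ : ℝ)
    (h : ∀ M : ℕ, ∃ N, M ≤ N ∧ δ * ((N : ℝ) + 1) ≤ ((A ∩ Set.Iic N).ncard : ℝ)) :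
    δ ≤ upperDensity A := by
  apply Filter.le_limsup_of_frequently_le _ (ud_bounded A)
  rw [Filter.frequently_atTop]
  intro M
  obtain ⟨N, hMN, hN⟩ := h M
  exact ⟨N, hMN, by rw [le_div_iff₀ (by positivity)]; linarith⟩

/-- Conversely, positive upper density gives frequent scales with proportional counts. -/
private lemma ud_frequently_of_pos (A : Set ℕ) (h : 0 < upperDensity A) :
    ∀ M : ℕ, ∃ N, M ≤ N ∧
      (upperDensity A / 2) * ((N : ℝ) + 1) ≤ ((A ∩ Set.Iic N).ncard : ℝ) := by
  intro M
  have hcb : Filter.IsCoboundedUnder (· ≤ ·) Filter.atTop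
      (fun N : ℕ => ((A ∩ Set.Iic N).ncard : ℝ) / ((N : ℝ) + 1)) := by
    exact Filter.isCoboundedUnder_le_of_le Filter.atTop (x := 0) (fun N => by positivity)
  have hlt : upperDensity A / 2 < Filter.limsup
      (fun N : ℕ => ((A ∩ Set.Iic N).ncard : ℝ) / ((N : ℝ) + 1)) Filter.atTop := by
    have : upperDensity A / 2 < upperDensity A := by linarith
    exact this
  have hfr := Filter.frequently_lt_of_lt_limsup hcb hlt
  rw [Filter.frequently_atTop] at hfr
  obtain ⟨N, hMN, hN⟩ := hfr M
  refine ⟨N, hMN, ?_⟩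
  rw [lt_div_iff₀ (by positivity)] at hN
  linarith

private lemma ud_empty : upperDensity (∅ : Set ℕ) = 0 := by
  unfold upperDensity
  have : (fun N : ℕ => (((∅ : Set ℕ) ∩ Set.Iic N).ncard : ℝ) / ((N : ℝ) + 1))
      = fun _ => (0 : ℝ) := by
    funext N
    simp
  rw [this, Filter.limsup_const]


section Helpers

variable {𝕜 : Type*} [RCLike 𝕜] {X : Type*} [NormedAddCommGroup X] [NormedSpace 𝕜 X]

/-- The basic open sets used in the Baire category argument. -/
private def OSet (T : X →L[𝕜] X) (V : Set X) (δ : ℝ) (M : ℕ) : Set X :=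
  {z | ∃ N : ℕ, M ≤ N ∧
    δ * ((N : ℝ) + 1) < (({n : ℕ | (T ^ n) z ∈ V} ∩ Set.Iic N).ncard : ℝ)}

private lemma isOpen_OSet (T : X →L[𝕜] X) (V : Set X) (δ : ℝ) (M : ℕ) (hV : IsOpen V) :
    IsOpen (OSet T V δ M) := by
  classical
  rw [isOpen_iff_mem_nhds]
  rintro z ⟨N, hNM, hcnt⟩
  set F := (Finset.range (N + 1)).filter (fun n => (T ^ n) z ∈ V) with hF
  have hopen : IsOpen {y : X | ∀ n ∈ F, (T ^ n) y ∈ V} := by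
    have : {y : X | ∀ n ∈ F, (T ^ n) y ∈ V} = ⋂ n ∈ F, ((T ^ n)) ⁻¹' V := by
      ext y; simp
    rw [this]
    exact isOpen_biInter_finset (fun n _ => hV.preimage (T ^ n).continuous)
  have hz : z ∈ {y : X | ∀ n ∈ F, (T ^ n) y ∈ V} := by
    intro n hn
    exact (Finset.mem_filter.mp hn).2
  filter_upwards [hopen.mem_nhds hz] with y hy
  refine ⟨N, hNM, lt_of_lt_of_le hcnt ?_⟩
  have h1 : ({n : ℕ | (T ^ n) z ∈ V} ∩ Set.Iic N).ncard = F.card := by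
    rw [← Set.ncard_coe_finset]
    congr 1
    ext n
    simp [hF, Nat.lt_succ_iff, and_comm]
  have h2 : F.card ≤ ({n : ℕ | (T ^ n) y ∈ V} ∩ Set.Iic N).ncard := by
    rw [show ({n : ℕ | (T ^ n) y ∈ V} ∩ Set.Iic N).ncard
        = ((Finset.range (N + 1)).filter (fun n => (T ^ n) y ∈ V)).card by
      rw [← Set.ncard_coe_finset]; congr 1; ext n; simp [Nat.lt_succ_iff, and_comm]]
    apply Finset.card_le_card
    intro n hn
    rw [Finset.mem_filter] at hn ⊢
    exact ⟨hn.1, hy n (Finset.mem_filter.mpr hn)⟩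
  rw [h1]
  exact_mod_cast h2



set_option maxHeartbeats 1000000 in
/-- The key construction: density of the sets `OSet T V δ M` for a suitable `δ = δ(V) > 0`. -/
private lemma dense_OSet (T : X →L[𝕜] X) (x : X)
    (hx : Dense (Set.range fun n : ℕ => (T ^ n) x))
    (hrec : Dense {y : X | UniformlyRecurrent T y})
    (ε δ₀ : ℝ) (hε : 0 < ε) (hδ₀ : 0 < δ₀)
    (hD : ∀ M : ℕ, ∃ N, M ≤ N ∧
      δ₀ * ((N : ℝ) + 1) ≤ (({n : ℕ | ‖(T ^ n) x‖ < ε} ∩ Set.Iic N).ncard : ℝ))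
    (V : Set X) (hV : IsOpen V) (hVne : V.Nonempty) :
    ∃ δ : ℝ, 0 < δ ∧ ∀ M : ℕ, Dense (OSet T V δ M) := by
  classical
  -- Step 1: a point of the orbit of `x` inside `V`, with a ball around it.
  obtain ⟨y₀, hy₀r, hy₀V⟩ := hx.exists_mem_open hV hVne
  obtain ⟨a, rfl⟩ := hy₀r
  simp only at hy₀V
  obtain ⟨r, hr, hball⟩ := Metric.isOpen_iff.mp hV _ hy₀V
  -- Step 2: a uniformly recurrent point `u` with `T^a u` close to `T^a x`.
  have hWopen : IsOpen ((T ^ a) ⁻¹' Metric.ball ((T ^ a) x) (r / 2)) :=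
    (Metric.isOpen_ball).preimage (T ^ a).continuous
  have hWne : ((T ^ a) ⁻¹' Metric.ball ((T ^ a) x) (r / 2)).Nonempty :=
    ⟨x, by simp [Metric.mem_ball, half_pos hr]⟩
  obtain ⟨u, hu, huW⟩ := hrec.exists_mem_open hWopen hWne
  have huUR : UniformlyRecurrent T u := hu
  set v : X := (T ^ a) u with hv
  have hballv : Metric.ball v (r / 2) ⊆ V := by
    intro y hy
    apply hball
    rw [Metric.mem_ball] at hy ⊢
    have h2 : dist v ((T ^ a) x) < r / 2 := huW
    calc dist y ((T ^ a) x) ≤ dist y v + dist v ((T ^ a) x) := dist_triangle _ _ _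
      _ < r / 2 + r / 2 := by linarith
      _ = r := by ring
  -- Step 3: syndetic returns of `u` to a small ball around itself.
  set β' : ℝ := (r / 2) / (2 * (‖T ^ a‖ + 1)) with hβ'
  have hβ'pos : 0 < β' := by
    apply div_pos (half_pos hr)
    positivity
  obtain ⟨N₀, hN₀⟩ := huUR (Metric.ball u β') (Metric.ball_mem_nhds u hβ'pos)
  have hN₀pos : 1 ≤ N₀ := by
    obtain ⟨n, hn1, hn2, _⟩ := hN₀ 0
    omega
  set K : ℕ := N₀ + a with hK
  have hKpos : 1 ≤ K := by omega
  -- Step 4: a uniform bound for the norms of the first `K` powers of `T`.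
  set C : ℝ := 1 + (Finset.range (K + 1)).sum (fun i => ‖T ^ i‖) with hC
  have hCpos : 0 < C := by
    have : (0 : ℝ) ≤ (Finset.range (K + 1)).sum (fun i => ‖T ^ i‖) :=
      Finset.sum_nonneg (fun i _ => norm_nonneg _)
    linarith
  have hCle : ∀ i, i ≤ K → ‖T ^ i‖ ≤ C := by
    intro i hi
    have h1 : ‖T ^ i‖ ≤ (Finset.range (K + 1)).sum (fun i => ‖T ^ i‖) :=
      Finset.single_le_sum (f := fun i => ‖T ^ i‖) (fun j _ => norm_nonneg _)
        (Finset.mem_range.mpr (by omega))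
    linarith
  -- Step 5: the scale of the perturbation.
  set lam : ℝ := (r / 4) / (C * ε) with hlam
  have hlampos : 0 < lam := by positivity
  have hlamCε : lam * (C * ε) = r / 4 := div_mul_cancel₀ _ (by positivity)
  refine ⟨δ₀ / (4 * (K : ℝ)), by positivity, ?_⟩
  intro M
  rw [dense_iff_inter_open]
  intro U hU hUne
  obtain ⟨w, hwU⟩ := hUne
  obtain ⟨s, hs, hsU⟩ := Metric.isOpen_iff.mp hU w hwU
  -- Step 6: choose `j` so that `lam • T^j x` is close to `w - u`, and set `z`.
  have hjex : ∃ j : ℕ, ((lam : 𝕜)) • ((T ^ j) x) ∈ Metric.ball (w - u) s := by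
    have hopen : IsOpen ((fun y : X => ((lam : 𝕜)) • y) ⁻¹' Metric.ball (w - u) s) :=
      Metric.isOpen_ball.preimage (continuous_const_smul _)
    have hlamne : ((lam : 𝕜)) ≠ 0 := by
      simpa using hlampos.ne'
    have hne : ((fun y : X => ((lam : 𝕜)) • y) ⁻¹' Metric.ball (w - u) s).Nonempty := by
      refine ⟨((lam : 𝕜))⁻¹ • (w - u), ?_⟩
      simp only [Set.mem_preimage, smul_inv_smul₀ hlamne]
      exact Metric.mem_ball_self hs
    obtain ⟨y, hyr, hymem⟩ := hx.exists_mem_open hopen hne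
    obtain ⟨j, rfl⟩ := hyr
    exact ⟨j, hymem⟩
  obtain ⟨j, hj⟩ := hjex
  set z : X := u + ((lam : 𝕜)) • ((T ^ j) x) with hz
  have hzU : z ∈ U := by
    apply hsU
    rw [Metric.mem_ball, dist_eq_norm]
    rw [Metric.mem_ball, dist_eq_norm] at hj
    have : z - w = ((lam : 𝕜)) • ((T ^ j) x) - (w - u) := by
      rw [hz]; abel
    rw [this]
    exact hj
  -- Step 7: the visit times.
  choose σf hσ1 hσ2 hσmem using hN₀
  set g : ℕ → ℕ := fun n => σf n + a with hg
  have hgdef : ∀ n, g n = σf n + a := fun n => rfl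
  have hgK : ∀ n, n ≤ g n ∧ g n < n + K := by
    intro n
    have := hσ1 n
    have := hσ2 n
    have := hgdef n
    constructor <;> omega
  have hvisit : ∀ n : ℕ, ‖(T ^ (n + j)) x‖ < ε → (T ^ (g n)) z ∈ V := by
    intro n hnD
    apply hballv
    rw [Metric.mem_ball, dist_eq_norm]
    have hTz : (T ^ (g n)) z = (T ^ (g n)) u + ((lam : 𝕜)) • ((T ^ (g n + j)) x) := by
      rw [hz, map_add, map_smul]
      congr 2
      rw [← ContinuousLinearMap.mul_apply, ← pow_add]
    -- first term
    have hterm1 : ‖(T ^ (g n)) u - v‖ < r / 4 := by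
      have hsplit : (T ^ (g n)) u = (T ^ a) ((T ^ (σf n)) u) := by
        have heq : g n = a + σf n := by rw [hgdef n]; omega
        rw [heq, pow_add, ContinuousLinearMap.mul_apply]
      rw [hsplit, hv]
      have : (T ^ a) ((T ^ (σf n)) u) - (T ^ a) u = (T ^ a) ((T ^ (σf n)) u - u) := by
        rw [map_sub]
      rw [this]
      have hd : ‖(T ^ (σf n)) u - u‖ < β' := by
        have := hσmem n
        rwa [Metric.mem_ball, dist_eq_norm] at this
      calc ‖(T ^ a) ((T ^ (σf n)) u - u)‖ ≤ ‖T ^ a‖ * ‖(T ^ (σf n)) u - u‖ :=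
            (T ^ a).le_opNorm _
        _ ≤ ‖T ^ a‖ * β' := by
            apply mul_le_mul_of_nonneg_left hd.le (norm_nonneg _)
        _ < (‖T ^ a‖ + 1) * β' := by nlinarith [hβ'pos, norm_nonneg (T ^ a)]
        _ = r / 4 := by
            rw [hβ']
            field_simp
            ring
    -- second term
    have hterm2 : ‖((lam : 𝕜)) • ((T ^ (g n + j)) x)‖ ≤ r / 4 := by
      have hnorm : ‖((lam : 𝕜)) • ((T ^ (g n + j)) x)‖ = lam * ‖(T ^ (g n + j)) x‖ := by
        rw [norm_smul, RCLike.norm_ofReal, abs_of_pos hlampos]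
      rw [hnorm]
      set i : ℕ := g n - n with hi
      have hiK : i ≤ K := by
        have := (hgK n).1
        have := (hgK n).2
        omega
      have hexp : g n + j = i + (n + j) := by
        have := (hgK n).1
        omega
      have hval : (T ^ (g n + j)) x = (T ^ i) ((T ^ (n + j)) x) := by
        rw [hexp, pow_add, ContinuousLinearMap.mul_apply]
      rw [hval]
      have h1 : ‖(T ^ i) ((T ^ (n + j)) x)‖ ≤ ‖T ^ i‖ * ‖(T ^ (n + j)) x‖ :=
        (T ^ i).le_opNorm _
      have h2 : ‖T ^ i‖ * ‖(T ^ (n + j)) x‖ ≤ C * ε := by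
        apply mul_le_mul (hCle i hiK) hnD.le (norm_nonneg _) hCpos.le
      calc lam * ‖(T ^ i) ((T ^ (n + j)) x)‖ ≤ lam * (C * ε) := by
            apply mul_le_mul_of_nonneg_left (le_trans h1 h2) hlampos.le
        _ = r / 4 := hlamCε
    calc ‖(T ^ (g n)) z - v‖
        = ‖((T ^ (g n)) u - v) + ((lam : 𝕜)) • ((T ^ (g n + j)) x)‖ := by
          rw [hTz]; congr 1; abel
      _ ≤ ‖(T ^ (g n)) u - v‖ + ‖((lam : 𝕜)) • ((T ^ (g n + j)) x)‖ := norm_add_le _ _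
      _ < r / 4 + r / 4 := by linarith
      _ = r / 2 := by ring
  -- Step 8: choose the scale `N`.
  obtain ⟨Nthr, hNthr⟩ := exists_nat_gt ((4 * (j : ℝ)) / δ₀)
  obtain ⟨N, hNge, hNcnt⟩ := hD (max (max M K) Nthr)
  have hNM : M ≤ N := le_trans (le_trans (le_max_left M K) (le_max_left _ Nthr)) hNge
  have hNK : K ≤ N := le_trans (le_trans (le_max_right M K) (le_max_left _ Nthr)) hNge
  have hNthr' : (4 * (j : ℝ)) / δ₀ < (N : ℝ) :=
    lt_of_lt_of_le hNthr (Nat.cast_le.mpr (le_trans (le_max_right _ Nthr) hNge))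
  -- Step 9: counting.
  set sD := (Finset.range (N + 1)).filter (fun m => ‖(T ^ m) x‖ < ε) with hsD
  set sD' := (Finset.range (N + 1)).filter (fun n => ‖(T ^ (n + j)) x‖ < ε) with hsD'
  set sVis := (Finset.range (N + K + 1)).filter (fun t => (T ^ t) z ∈ V) with hsVis
  have h1 : sD.card ≤ sD'.card + j := by
    have himage : ((sD.filter (fun m => j ≤ m)).image (fun m => m - j)) ⊆ sD' := by
      intro n hn
      simp only [Finset.mem_image, Finset.mem_filter, Finset.mem_range, hsD, hsD'] at hn ⊢
      obtain ⟨m, ⟨⟨hm1, hm2⟩, hm3⟩, rfl⟩ := hn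
      refine ⟨by omega, ?_⟩
      have hmm : m - j + j = m := by omega
      rw [hmm]
      exact hm2
    have hinj : Set.InjOn (fun m => m - j) ↑(sD.filter (fun m => j ≤ m)) := by
      intro p hp q hq hpq
      simp only [Finset.coe_filter, Set.mem_setOf_eq] at hp hq
      simp only at hpq
      omega
    have hcard1 : (sD.filter (fun m => j ≤ m)).card ≤ sD'.card := by
      rw [← Finset.card_image_of_injOn hinj]
      exact Finset.card_le_card himage
    have hcard2 : (sD.filter (fun m => ¬ j ≤ m)).card ≤ j := by
      refine le_trans (Finset.card_le_card
        (show sD.filter (fun m => ¬ j ≤ m) ⊆ Finset.range j from ?_)) ?_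
      · intro m hm
        simp only [Finset.mem_filter, Finset.mem_range] at hm ⊢
        omega
      · simp
    have hsplit := Finset.card_filter_add_card_filter_not
      (s := sD) (p := fun m => j ≤ m)
    omega
  have himgsub : sD'.image g ⊆ sVis := by
    intro t ht
    simp only [Finset.mem_image, Finset.mem_filter, Finset.mem_range, hsD', hsVis] at ht ⊢
    obtain ⟨n, ⟨hn1, hn2⟩, rfl⟩ := ht
    refine ⟨?_, hvisit n hn2⟩
    have := (hgK n).2
    omega
  have h2 : sD'.card ≤ K * sVis.card := by
    calc sD'.card ≤ K * (sD'.image g).card := by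
          apply Finset.card_le_mul_card_image
          intro t ht
          refine le_trans (Finset.card_le_card
            (show (sD'.filter (fun n => g n = t)) ⊆ Finset.Icc (t + 1 - K) t from ?_)) ?_
          · intro n hn
            have hn' := Finset.mem_filter.mp hn
            have hgt : g n = t := hn'.2
            have h3 := (hgK n).1
            have h4 := (hgK n).2
            rw [Finset.mem_Icc]
            omega
          · rw [Nat.card_Icc]
            omega
      _ ≤ K * sVis.card := Nat.mul_le_mul_left K (Finset.card_le_card himgsub)
  have hbr1 : (({n : ℕ | ‖(T ^ n) x‖ < ε} ∩ Set.Iic N).ncard : ℝ) = (sD.card : ℝ) := by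
    norm_cast
    rw [← Set.ncard_coe_finset]
    congr 1
    ext m
    simp [hsD, Nat.lt_succ_iff, and_comm]
  have hcnt : δ₀ * ((N : ℝ) + 1) ≤ (sD.card : ℝ) := by
    rw [← hbr1]; exact hNcnt
  have hbr2 : (({n : ℕ | (T ^ n) z ∈ V} ∩ Set.Iic (N + K)).ncard : ℝ) = (sVis.card : ℝ) := by
    norm_cast
    rw [← Set.ncard_coe_finset]
    congr 1
    ext m
    simp [hsVis, Nat.lt_succ_iff, and_comm]
  refine ⟨z, hzU, ⟨N + K, by omega, ?_⟩⟩
  rw [hbr2]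
  rw [div_mul_eq_mul_div, div_lt_iff₀ (by positivity)]
  -- real arithmetic
  have hc1 : (sD.card : ℝ) ≤ (sD'.card : ℝ) + (j : ℝ) := by exact_mod_cast h1
  have hc2 : (sD'.card : ℝ) ≤ (K : ℝ) * (sVis.card : ℝ) := by exact_mod_cast h2
  have hA : δ₀ * ((N : ℝ) + 1) ≤ (K : ℝ) * (sVis.card : ℝ) + (j : ℝ) := by linarith
  have hj4 : 4 * (j : ℝ) < δ₀ * ((N : ℝ) + 1) := by
    rw [div_lt_iff₀ hδ₀] at hNthr'
    nlinarith
  have hKN : (K : ℝ) ≤ (N : ℝ) := by exact_mod_cast hNK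
  have hδK : δ₀ * (K : ℝ) ≤ δ₀ * ((N : ℝ) + 1) := by nlinarith
  have hApos : 0 < δ₀ * ((N : ℝ) + 1) := by positivity
  have hcast : ((N + K : ℕ) : ℝ) = (N : ℝ) + (K : ℝ) := by push_cast; ring
  rw [hcast]
  nlinarith



end Helpers

/-- Let `T` be a hypercyclic continuous linear operator on a separable Banach space `X`
(over `ℝ` or `ℂ`) whose uniformly recurrent points are dense. Then `T` is `U`-frequently
hypercyclic iff there are a hypercyclic vector `x` and `ε > 0` such that
`{n : ‖Tⁿx‖ < ε}` has positive upper density (i.e. `c(T) > 0`). -/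
theorem statement15 {𝕜 : Type*} [RCLike 𝕜] {X : Type*} [NormedAddCommGroup X]
    [NormedSpace 𝕜 X] [CompleteSpace X] [TopologicalSpace.SeparableSpace X]
    (T : X →L[𝕜] X)
    (hhc : ∃ x : X, Dense (Set.range fun n : ℕ => (T ^ n) x))
    (hrec : Dense {x : X | UniformlyRecurrent T x}) :
    (∃ x : X, ∀ V : Set X, IsOpen V → V.Nonempty →
        0 < upperDensity {n : ℕ | (T ^ n) x ∈ V}) ↔
    (∃ (x : X) (ε : ℝ), 0 < ε ∧ Dense (Set.range fun n : ℕ => (T ^ n) x) ∧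
        0 < upperDensity {n : ℕ | ‖(T ^ n) x‖ < ε}) := by
  constructor
  · rintro ⟨x, hx⟩
    have hdense : Dense (Set.range fun n : ℕ => (T ^ n) x) := by
      rw [dense_iff_inter_open]
      intro U hU hUne
      have hpos := hx U hU hUne
      by_contra hcon
      have hem : {n : ℕ | (T ^ n) x ∈ U} = ∅ := by
        ext n
        simp only [Set.mem_setOf_eq, Set.mem_empty_iff_false, iff_false]
        intro hn
        exact hcon ⟨(T ^ n) x, hn, ⟨n, rfl⟩⟩
      rw [hem, ud_empty] at hpos
      exact lt_irrefl 0 hpos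
    refine ⟨x, 1, one_pos, hdense, ?_⟩
    have hpos := hx (Metric.ball 0 1) Metric.isOpen_ball ⟨0, by simp⟩
    have hset : {n : ℕ | ‖(T ^ n) x‖ < 1} = {n : ℕ | (T ^ n) x ∈ Metric.ball 0 1} := by
      ext n
      simp [mem_ball_zero_iff]
    rw [hset]
    exact hpos
  · rintro ⟨x, ε, hε, hxd, hud⟩
    classical
    haveI : Nonempty X := ⟨0⟩
    haveI : SecondCountableTopology X :=
      UniformSpace.secondCountable_of_separable X
    obtain ⟨B, hBcount, hBne, hBbasis⟩ := TopologicalSpace.exists_countable_basis X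
    set δ₀ : ℝ := upperDensity {n : ℕ | ‖(T ^ n) x‖ < ε} / 2 with hδ₀def
    have hδ₀ : 0 < δ₀ := half_pos hud
    have hfreq : ∀ M : ℕ, ∃ N, M ≤ N ∧
        δ₀ * ((N : ℝ) + 1) ≤ (({n : ℕ | ‖(T ^ n) x‖ < ε} ∩ Set.Iic N).ncard : ℝ) :=
      ud_frequently_of_pos _ hud
    have hkey : ∀ b : B, ∃ δ : ℝ, 0 < δ ∧ ∀ M : ℕ, Dense (OSet T (b : Set X) δ M) := by
      rintro ⟨b, hb⟩
      have hbo : IsOpen b := hBbasis.isOpen hb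
      have hbne : b.Nonempty := by
        rw [Set.nonempty_iff_ne_empty]
        rintro rfl
        exact hBne hb
      exact dense_OSet T x hxd hrec ε δ₀ hε hδ₀ hfreq b hbo hbne
    choose δf hδf hOd using hkey
    haveI : Countable B := hBcount.to_subtype
    have hG : Dense (⋂ p : B × ℕ, OSet T (p.1 : Set X) (δf p.1) p.2) := by
      apply dense_iInter_of_isOpen
      · exact fun p => isOpen_OSet T _ _ _ (hBbasis.isOpen p.1.2)
      · exact fun p => hOd p.1 p.2
    obtain ⟨z, hz⟩ := hG.nonempty
    refine ⟨z, ?_⟩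
    intro V hVo hVne
    obtain ⟨y, hyV⟩ := hVne
    obtain ⟨b, hbB, hyb, hbV⟩ := hBbasis.exists_subset_of_mem_open hyV hVo
    have hzO : ∀ M : ℕ, z ∈ OSet T b (δf ⟨b, hbB⟩) M := by
      intro M
      exact Set.mem_iInter.mp hz ⟨⟨b, hbB⟩, M⟩
    have hpos : 0 < δf ⟨b, hbB⟩ := hδf ⟨b, hbB⟩
    apply lt_of_lt_of_le hpos
    apply ud_ge_of_frequently
    intro M
    obtain ⟨N, hNM, hlt⟩ := hzO M
    refine ⟨N, hNM, le_trans hlt.le ?_⟩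
    have hsub : ({n : ℕ | (T ^ n) z ∈ b} ∩ Set.Iic N) ⊆
        ({n : ℕ | (T ^ n) z ∈ V} ∩ Set.Iic N) := by
      rintro n ⟨hn1, hn2⟩
      exact ⟨hbV hn1, hn2⟩
    have := Set.ncard_le_ncard hsub (ud_inter_finite _ N)
    exact_mod_cast this
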